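/- For all integers m, n, r ≥ 0 and every integer k, in ℤ[q]: S_q^{(r)}(m+n,k) = Σ_{i=0}^{n} Σ_{j=0}^{m} q^{i(j+r)} · ([j+r]_q)^{n-i} · C(n,i) · S_q^{(r)}(m,j) · S_q(i,k-j), where C(n,i) is the ordinary binomial coefficient. -/

import Mathlib

/-!
As a function of `n`, `S_q^{(r)}(n, ·)` obeys the triangular recurrence
`S^{(r)}(n+1,k) = q^{k+r-1} S^{(r)}(n,k-1) + [k+r]_q S^{(r)}(n,k)` with `S^{(r)}(0,k) = δ_{k,0}`:
this follows from the recurrence of `S_q` by Pascal's rule, using `[k+r]_q = [r]_q + q^r [k]_q`.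
Shifting `k` by `j` turns the weights of `S^{(j+r)}` into those of `S^{(r)}`, so both sides of
`S^{(r)}(m+n,k) = ∑_j S^{(r)}(m,j) S^{(j+r)}(n,k-j)` satisfy the same recurrence in `n`, and the
theorem is this convolution with `S^{(j+r)}` unfolded.
-/

open Finset Polynomial

/-- The q-integer [n]_q = 1 + q + ⋯ + q^{n-1} in ℤ[q]. -/
noncomputable def qint (n : ℕ) : Polynomial ℤ := ∑ i ∈ range n, X ^ i

/-- q-Stirling numbers of the second kind (natural-number index version). -/
noncomputable def qStirling2Nat : ℕ → ℕ → Polynomial ℤ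
  | 0, 0 => 1
  | 0, _ + 1 => 0
  | _ + 1, 0 => 0
  | n + 1, k + 1 => X ^ k * qStirling2Nat n k + qint (k + 1) * qStirling2Nat n (k + 1)

/-- q-Stirling numbers of the second kind, vanishing for negative second index. -/
noncomputable def qStirling2 (n : ℕ) (k : ℤ) : Polynomial ℤ :=
  if 0 ≤ k then qStirling2Nat n k.toNat else 0

/-- q-r-Stirling numbers of the second kind. -/
noncomputable def qrStirling2 (r n : ℕ) (k : ℤ) : Polynomial ℤ :=
  ∑ i ∈ range (n + 1), X ^ (i * r) * (qint r) ^ (n - i) * (n.choose i : Polynomial ℤ) *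
    qStirling2 i k

theorem Finset.sum_range_pow_mul_pow_mul_choose_succ {R : Type*} [CommSemiring R] (x y : R)
    (u : ℕ → R) (n : ℕ) :
    ∑ i ∈ range (n + 2), x ^ i * y ^ (n + 1 - i) * ((n + 1).choose i : R) * u i =
      y * ∑ i ∈ range (n + 1), x ^ i * y ^ (n - i) * (n.choose i : R) * u i +
        x * ∑ i ∈ range (n + 1), x ^ i * y ^ (n - i) * (n.choose i : R) * u (i + 1) := by
  have h := sum_choose_succ_mul (fun i j => x ^ i * y ^ j * u i) n
  simp only [mul_sum]
  convert h using 1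
  · exact sum_congr rfl fun i _ => by ring
  · congr 1 <;> refine sum_congr rfl fun i hi => ?_
    · rw [Nat.sub_add_comm (Nat.lt_succ_iff.mp (mem_range.mp hi)), pow_succ]
      ring
    · ring

theorem qint_zero : qint 0 = 0 := rfl

theorem qint_add (a b : ℕ) : qint (a + b) = qint a + X ^ a * qint b := by
  simp only [qint, sum_range_add, mul_sum, pow_add]

theorem qStirling2_of_neg {n : ℕ} {k : ℤ} (hk : k < 0) : qStirling2 n k = 0 := by
  simp [qStirling2, hk.not_ge]

theorem qStirling2Nat_eq_zero_of_lt {n k : ℕ} (h : n < k) : qStirling2Nat n k = 0 := by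
  induction n generalizing k with
  | zero => obtain ⟨k, rfl⟩ := Nat.exists_eq_add_of_lt h; rfl
  | succ n ih =>
    obtain ⟨k, rfl⟩ := Nat.exists_eq_add_of_lt (Nat.zero_lt_of_lt h)
    rw [zero_add, qStirling2Nat, ih (by omega), ih (by omega), mul_zero, mul_zero, add_zero]

theorem qStirling2_eq_zero_of_lt {n : ℕ} {k : ℤ} (h : (n : ℤ) < k) : qStirling2 n k = 0 := by
  rw [qStirling2, if_pos (by omega), qStirling2Nat_eq_zero_of_lt (by omega)]

theorem qStirling2_zero_left (k : ℤ) : qStirling2 0 k = if k = 0 then 1 else 0 := by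
  rcases lt_trichotomy k 0 with hk | rfl | hk
  · rw [qStirling2_of_neg hk, if_neg hk.ne]
  · rfl
  · rw [qStirling2_eq_zero_of_lt (by simpa using hk), if_neg hk.ne']

-- For `k ≤ 0` the truncated exponent `(k - 1).toNat` is harmless: its cofactor vanishes.
theorem qStirling2_succ (n : ℕ) (k : ℤ) :
    qStirling2 (n + 1) k =
      X ^ (k - 1).toNat * qStirling2 n (k - 1) + qint k.toNat * qStirling2 n k := by
  rcases k with (_ | k) | k
  · simp [qStirling2, qStirling2Nat, qint_zero]
  · simp [qStirling2, qStirling2Nat, (by omega : (0 : ℤ) ≤ k + 1)]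
  · simp [qStirling2_of_neg, Int.negSucc_lt_zero, qint_zero]

section qrStirling2

variable (r : ℕ)

theorem qrStirling2_of_neg (n : ℕ) {k : ℤ} (hk : k < 0) : qrStirling2 r n k = 0 :=
  sum_eq_zero fun i _ => by rw [qStirling2_of_neg hk, mul_zero]

theorem qrStirling2_eq_zero_of_lt {n : ℕ} {k : ℤ} (h : (n : ℤ) < k) : qrStirling2 r n k = 0 :=
  sum_eq_zero fun i hi => by
    rw [qStirling2_eq_zero_of_lt (by have := mem_range.mp hi; omega), mul_zero]

theorem qrStirling2_zero_left (k : ℤ) : qrStirling2 r 0 k = if k = 0 then 1 else 0 := by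
  simp [qrStirling2, qStirling2_zero_left]

theorem qrStirling2_succ (n : ℕ) (k : ℤ) :
    qrStirling2 r (n + 1) k =
      X ^ (k + r - 1).toNat * qrStirling2 r n (k - 1) + qint (k + r).toNat * qrStirling2 r n k := by
  have pascal : qrStirling2 r (n + 1) k = qint r * qrStirling2 r n k +
      X ^ r * (X ^ (k - 1).toNat * qrStirling2 r n (k - 1) + qint k.toNat * qrStirling2 r n k) := by
    simp only [qrStirling2, pow_mul']
    rw [sum_range_pow_mul_pow_mul_choose_succ]
    simp only [qStirling2_succ, mul_add, sum_add_distrib, mul_sum]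
    rw [add_right_inj]
    exact congrArg₂ (· + ·) (sum_congr rfl fun i _ => by ring) (sum_congr rfl fun i _ => by ring)
  rcases lt_trichotomy k 0 with hk | rfl | hk
  · simp [pascal, qrStirling2_of_neg r n hk, qrStirling2_of_neg r n (by omega : k - 1 < 0)]
  · rw [pascal, qrStirling2_of_neg r n (by omega : (0 : ℤ) - 1 < 0)]
    simp [qint_zero]
  · rw [pascal, show (k + r - 1).toNat = r + (k - 1).toNat by omega,
      show (k + r).toNat = r + k.toNat by omega, qint_add, pow_add]
    ring

end qrStirling2

theorem qrStirling2_add_eq_sum_mul (m r n : ℕ) (k : ℤ) :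
    qrStirling2 r (m + n) k =
      ∑ j ∈ range (m + 1), qrStirling2 r m j * qrStirling2 (j + r) n (k - j) := by
  induction n generalizing k with
  | zero =>
    simp only [add_zero, qrStirling2_zero_left, mul_ite, mul_one, mul_zero, sub_eq_zero]
    by_cases hk : 0 ≤ k ∧ k ≤ m
    · lift k to ℕ using hk.1
      simp only [Nat.cast_inj, sum_ite_eq, mem_range]
      rw [if_pos (by omega)]
    · rw [sum_eq_zero fun j hj => if_neg (by have := mem_range.mp hj; omega)]
      rcases not_and_or.mp hk with hk | hk
      · exact qrStirling2_of_neg r m (not_le.mp hk)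
      · exact qrStirling2_eq_zero_of_lt r (not_le.mp hk)
  | succ n ih =>
    have hr (j : ℕ) : k - j + (j + r : ℕ) = k + r := by push_cast; ring
    simp only [← add_assoc, qrStirling2_succ, ih, hr, sub_right_comm _ _ (1 : ℤ), mul_add,
      sum_add_distrib, mul_sum, mul_left_comm (qrStirling2 r m _)]

theorem qrStirling2_add (m n r : ℕ) (k : ℤ) :
    qrStirling2 r (m + n) k =
      ∑ i ∈ range (n + 1), ∑ j ∈ range (m + 1),
        X ^ (i * (j + r)) * (qint (j + r)) ^ (n - i) * (n.choose i : Polynomial ℤ) *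
          qrStirling2 r m (j : ℤ) * qStirling2 i (k - j) := by
  rw [qrStirling2_add_eq_sum_mul, sum_comm]
  refine sum_congr rfl fun j _ => ?_
  rw [qrStirling2.eq_1 (j + r), mul_sum]
  exact sum_congr rfl fun i _ => by ring
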